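/- arXiv:1805.05199 — 2 statements merged into one kernel-verified Lean document; each statement's English description precedes it below -/
import Mathlib

section
/- Let 0 < p < 1 and α, β₁, β₂, β₃ > 0. Let V₁, V₂, V₃ be independent ℕ-valued random variables with P(Vᵢ ≤ x) = (1 − p^{(x+1)^α})^{βᵢ} for all x ∈ ℕ, and set X₁ = max{V₁, V₃}, X₂ = max{V₂, V₃}. Then for i = 1, 2 and for all x ∈ ℕ, the marginal probability mass function satisfies P(Xᵢ = x) = (1 − p^{(x+1)^α})^{βᵢ+β₃} − (1 − p^{x^α})^{βᵢ+β₃}. -/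
open MeasureTheory ProbabilityTheory

/-!
By independence, `P(max(Vᵢ, V₃) ≤ x) = P(Vᵢ ≤ x) P(V₃ ≤ x)`, and the EDW CDFs with common
`(α, p)` are powers of one base `1 - p^((x+1)^α) ∈ (0, 1)`, so this product is the EDW CDF
with exponent `βᵢ + β₃`. Differencing consecutive values of that CDF gives the PMF.
-/

noncomputable def edwCDF (α p β : ℝ) (x : ℕ) : ℝ :=
  (1 - p ^ (((x : ℝ) + 1) ^ α)) ^ β

/-- At `x = 0` the subtracted term is `(1 - p ^ 0 ^ α) ^ β`, which vanishes only for `α ≠ 0`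
and `β ≠ 0` (`Real.rpow` has `0 ^ 0 = 1`). -/
noncomputable def edwPMF (α p β : ℝ) (x : ℕ) : ℝ :=
  (1 - p ^ (((x : ℝ) + 1) ^ α)) ^ β - (1 - p ^ ((x : ℝ) ^ α)) ^ β

section EDW

variable {α p : ℝ}

theorem edwCDF_add (hp0 : 0 ≤ p) (hp1 : p < 1) (βa βb : ℝ) (x : ℕ) :
    edwCDF α p (βa + βb) x = edwCDF α p βa x * edwCDF α p βb x := by
  have hpow : p ^ (((x : ℝ) + 1) ^ α) < 1 := Real.rpow_lt_one hp0 hp1 (by positivity)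
  exact Real.rpow_add (by linarith) βa βb

theorem edwPMF_zero (hα : α ≠ 0) {β : ℝ} (hβ : β ≠ 0) :
    edwPMF α p β 0 = edwCDF α p β 0 := by
  simp [edwPMF, edwCDF, Real.zero_rpow hα, Real.zero_rpow hβ]

theorem edwPMF_succ (β : ℝ) (n : ℕ) :
    edwPMF α p β (n + 1) = edwCDF α p β (n + 1) - edwCDF α p β n := by
  simp only [edwPMF, edwCDF, Nat.cast_add, Nat.cast_one]

end EDW

section MaxOfIndependent

variable {Ω : Type*} [MeasurableSpace Ω] {μ : Measure Ω}

theorem ProbabilityTheory.IndepFun.measure_max_le_eq_mul {V W : Ω → ℕ} (h : IndepFun V W μ)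
    (x : ℕ) :
    μ {ω | max (V ω) (W ω) ≤ x} = μ {ω | V ω ≤ x} * μ {ω | W ω ≤ x} := by
  have hmax : {ω | max (V ω) (W ω) ≤ x} = V ⁻¹' Set.Iic x ∩ W ⁻¹' Set.Iic x := by
    ext ω
    exact max_le_iff (a := V ω)
  exact hmax ▸ h.measure_inter_preimage_eq_mul _ _ measurableSet_Iic measurableSet_Iic

theorem measureReal_nat_eq_succ [IsFiniteMeasure μ] {X : Ω → ℕ} (hX : Measurable X) (n : ℕ) :
    μ.real {ω | X ω = n + 1} = μ.real {ω | X ω ≤ n + 1} - μ.real {ω | X ω ≤ n} := by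
  have hdiff : {ω | X ω = n + 1} = {ω | X ω ≤ n + 1} \ {ω | X ω ≤ n} := by
    ext ω
    simp only [Set.mem_ofPred_eq, Set.mem_sdiff, not_le]
    omega
  have hmono : {ω | X ω ≤ n} ⊆ {ω | X ω ≤ n + 1} := fun _ h => h.trans n.le_succ
  rw [hdiff, measureReal_sdiff hmono (hX measurableSet_Iic)]

theorem ProbabilityTheory.IndepFun.measureReal_max_eq_edwPMF [IsFiniteMeasure μ]
    {α p βa βb : ℝ} (hp0 : 0 ≤ p) (hp1 : p < 1) (hα : α ≠ 0) (hβ : βa + βb ≠ 0) {V W : Ω → ℕ}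
    (hmV : Measurable V) (hmW : Measurable W)
    (h : IndepFun V W μ) (hV : ∀ x : ℕ, μ.real {ω | V ω ≤ x} = edwCDF α p βa x)
    (hW : ∀ x : ℕ, μ.real {ω | W ω ≤ x} = edwCDF α p βb x) (x : ℕ) :
    μ.real {ω | max (V ω) (W ω) = x} = edwPMF α p (βa + βb) x := by
  have hcdf (y : ℕ) : μ.real {ω | max (V ω) (W ω) ≤ y} = edwCDF α p (βa + βb) y := by
    rw [measureReal_def, h.measure_max_le_eq_mul, ENNReal.toReal_mul, ← measureReal_def,
      ← measureReal_def, hV, hW, edwCDF_add hp0 hp1]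
  cases x with
  | zero => simp only [← Nat.le_zero, hcdf, edwPMF_zero hα hβ]
  | succ n => rw [measureReal_nat_eq_succ (hmV.max hmW), hcdf, hcdf, edwPMF_succ]

end MaxOfIndependent

/-- The marginal PMFs of the BDEW distribution. -/
theorem bdew_marginal_pmf
    {Ω : Type*} [MeasurableSpace Ω] (μ : Measure Ω) [IsProbabilityMeasure μ]
    (α p β₁ β₂ β₃ : ℝ)
    (hp0 : 0 < p) (hp1 : p < 1) (hα : 0 < α)
    (hβ₁ : 0 < β₁) (hβ₂ : 0 < β₂) (hβ₃ : 0 < β₃)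
    (V₁ V₂ V₃ : Ω → ℕ)
    (hm₁ : Measurable V₁) (hm₂ : Measurable V₂) (hm₃ : Measurable V₃)
    (hindep : iIndepFun ![V₁, V₂, V₃] μ)
    (hcdf₁ : ∀ x : ℕ, (μ {ω | V₁ ω ≤ x}).toReal = edwCDF α p β₁ x)
    (hcdf₂ : ∀ x : ℕ, (μ {ω | V₂ ω ≤ x}).toReal = edwCDF α p β₂ x)
    (hcdf₃ : ∀ x : ℕ, (μ {ω | V₃ ω ≤ x}).toReal = edwCDF α p β₃ x) :
    ∀ x : ℕ,
      (μ {ω | max (V₁ ω) (V₃ ω) = x}).toReal = edwPMF α p (β₁ + β₃) x ∧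
      (μ {ω | max (V₂ ω) (V₃ ω) = x}).toReal = edwPMF α p (β₂ + β₃) x := by
  have h₁₃ : IndepFun V₁ V₃ μ := hindep.indepFun (i := 0) (j := 2) (by decide)
  have h₂₃ : IndepFun V₂ V₃ μ := hindep.indepFun (i := 1) (j := 2) (by decide)
  intro x
  exact ⟨h₁₃.measureReal_max_eq_edwPMF hp0.le hp1 hα.ne' (by positivity) hm₁ hm₃
      hcdf₁ hcdf₃ x,
    h₂₃.measureReal_max_eq_edwPMF hp0.le hp1 hα.ne' (by positivity) hm₂ hm₃ hcdf₂ hcdf₃ x⟩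
end

section
/- Let 0 < p < 1 and α, β₁, β₂, β₃ > 0. Let V₁, V₂, V₃ be independent ℕ-valued random variables with P(Vᵢ ≤ x) = (1 − p^{(x+1)^α})^{βᵢ} for all x ∈ ℕ, and set X₁ = max{V₁, V₃}, X₂ = max{V₂, V₃}. Then for all x₁, x₂ ∈ ℕ the conditional probability mass function f(x₁ | x₂) = P(X₁ = x₁, X₂ = x₂) / P(X₂ = x₂) satisfies: (i) if x₁ < x₂, f(x₁ | x₂) = [(1 − p^{(x₁+1)^α})^{β₁+β₃} − (1 − p^{x₁^α})^{β₁+β₃}] · [(1 − p^{(x₂+1)^α})^{β₂} − (1 − p^{x₂^α})^{β₂}] / [(1 − p^{(x₂+1)^α})^{β₂+β₃} − (1 − p^{x₂^α})^{β₂+β₃}]; (ii) if x₂ < x₁, f(x₁ | x₂) = (1 − p^{(x₁+1)^α})^{β₁} − (1 − p^{x₁^α})^{β₁}; (iii) if x₁ = x₂ = x, f(x₁ | x₂) = (1 − p^{(x+1)^α})^{β₁} − (1 − p^{x^α})^{β₁+β₃} · [(1 − p^{(x+1)^α})^{β₂} − (1 − p^{x^α})^{β₂}] / [(1 − p^{(x+1)^α})^{β₂+β₃}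 − (1 − p^{x^α})^{β₂+β₃}]. -/
open MeasureTheory ProbabilityTheory

/-!
With `c = dwBase α p` we have `P(Vᵢ < x) = c x ^ βᵢ` for every `x`, also at `x = 0` since
`c 0 = 0`. By independence, `P(X₁ < a, X₂ < b) = c a ^ β₁ * c b ^ β₂ * c (min a b) ^ β₃`, and
`P(X₁ = x₁, X₂ = x₂)` is the mixed second difference of this function in `(a, b)`, while
`P(X₂ = x) = c (x + 1) ^ (β₂ + β₃) - c x ^ (β₂ + β₃)`. In each of the three cases the `min`s
resolve and the quotient reduces by `c ^ (β + β') = c ^ β * c ^ β'`.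
-/
/-- `P(V < x) = dwBase α p x ^ β` for `V ~ EDW(α, p, β)`. -/
noncomputable def dwBase (α p : ℝ) (x : ℕ) : ℝ := 1 - p ^ ((x : ℝ) ^ α)

section DiscreteWeibull
variable {α p : ℝ}

lemma dwBase_succ (x : ℕ) : dwBase α p (x + 1) = 1 - p ^ (((x : ℝ) + 1) ^ α) := by
  simp [dwBase]

lemma edwCDF_eq_dwBase (β : ℝ) (x : ℕ) : edwCDF α p β x = dwBase α p (x + 1) ^ β := by
  rw [dwBase_succ]; rfl

lemma edwPMF_eq_dwBase (β : ℝ) (x : ℕ) :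
    edwPMF α p β x = dwBase α p (x + 1) ^ β - dwBase α p x ^ β := by
  rw [dwBase_succ]; rfl

lemma dwBase_zero (hα : α ≠ 0) : dwBase α p 0 = 0 := by
  simp [dwBase, Real.zero_rpow hα]

lemma dwBase_nonneg (hp0 : 0 ≤ p) (hp1 : p ≤ 1) (x : ℕ) : 0 ≤ dwBase α p x :=
  sub_nonneg.2 (Real.rpow_le_one hp0 hp1 (by positivity))

lemma dwBase_lt_succ (hp0 : 0 < p) (hp1 : p < 1) (hα : 0 < α) (x : ℕ) :
    dwBase α p x < dwBase α p (x + 1) := by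
  have hexp : (x : ℝ) ^ α < ((x + 1 : ℕ) : ℝ) ^ α := by
    gcongr; exact_mod_cast x.lt_succ_self
  exact sub_lt_sub_left (Real.rpow_lt_rpow_of_exponent_gt hp0 hp1 hexp) 1

lemma edwPMF_pos (hp0 : 0 < p) (hp1 : p < 1) (hα : 0 < α) {β : ℝ} (hβ : 0 < β) (x : ℕ) :
    0 < edwPMF α p β x := by
  rw [edwPMF_eq_dwBase, sub_pos]
  exact Real.rpow_lt_rpow (dwBase_nonneg hp0.le hp1.le x) (dwBase_lt_succ hp0 hp1 hα x) hβ

lemma dwBase_rpow_add (hp0 : 0 ≤ p) (hp1 : p ≤ 1) {β β' : ℝ} (h : β + β' ≠ 0) (x : ℕ) :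
    dwBase α p x ^ (β + β') = dwBase α p x ^ β * dwBase α p x ^ β' :=
  Real.rpow_add' (dwBase_nonneg hp0 hp1 x) h

lemma measureReal_lt_eq_dwBase_rpow {Ω : Type*} [MeasurableSpace Ω] {μ : Measure Ω}
    {V : Ω → ℕ} {β : ℝ} (hα : α ≠ 0) (hβ : β ≠ 0)
    (hcdf : ∀ x : ℕ, (μ {ω | V ω ≤ x}).toReal = edwCDF α p β x) (x : ℕ) :
    μ.real {ω | V ω < x} = dwBase α p x ^ β := by
  cases x with
  | zero => simp [dwBase_zero hα, Real.zero_rpow hβ]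
  | succ x => simpa [Nat.lt_succ_iff, edwCDF_eq_dwBase, measureReal_def] using hcdf x

end DiscreteWeibull

section NatValued
variable {Ω : Type*} [MeasurableSpace Ω] {μ : Measure Ω} [IsFiniteMeasure μ]

lemma measureReal_eq_and_eq_sub {X : Ω → ℕ} (hX : Measurable X) {P : Ω → Prop}
    (hP : MeasurableSet {ω | P ω}) (x : ℕ) :
    μ.real {ω | X ω = x ∧ P ω} =
      μ.real {ω | X ω < x + 1 ∧ P ω} - μ.real {ω | X ω < x ∧ P ω} := by
  have hdisj : Disjoint {ω | X ω = x ∧ P ω} {ω | X ω < x ∧ P ω} :=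
    Set.disjoint_left.2 fun ω h h' => (h'.1.trans_eq h.1.symm).false
  rw [eq_sub_iff_add_eq,
    ← measureReal_union hdisj ((measurableSet_lt hX measurable_const).inter hP)]
  congr 1; ext ω
  simp only [Set.mem_union, Set.mem_ofPred_eq, Nat.lt_succ_iff_lt_or_eq]
  tauto

lemma measureReal_eq_and_eq {X Y : Ω → ℕ} (hX : Measurable X) (hY : Measurable Y) (x y : ℕ) :
    μ.real {ω | X ω = x ∧ Y ω = y} =
      μ.real {ω | X ω < x + 1 ∧ Y ω < y + 1} - μ.real {ω | X ω < x ∧ Y ω < y + 1} -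
        (μ.real {ω | X ω < x + 1 ∧ Y ω < y} - μ.real {ω | X ω < x ∧ Y ω < y}) := by
  simp_rw [and_comm (a := X _ = x),
    measureReal_eq_and_eq_sub hY (measurableSet_eq_fun hX measurable_const),
    and_comm (b := X _ = x), measureReal_eq_and_eq_sub hX (measurableSet_lt hY measurable_const)]

end NatValued

namespace ProbabilityTheory
variable {Ω : Type*} [MeasurableSpace Ω] {μ : Measure Ω}

lemma iIndepFun.measureReal_inter_preimage_three {β : Type*} [MeasurableSpace β]
    {V₁ V₂ V₃ : Ω → β} (h : iIndepFun ![V₁, V₂, V₃] μ) {S₁ S₂ S₃ : Set β}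
    (hS₁ : MeasurableSet S₁) (hS₂ : MeasurableSet S₂) (hS₃ : MeasurableSet S₃) :
    μ.real (V₁ ⁻¹' S₁ ∩ V₂ ⁻¹' S₂ ∩ V₃ ⁻¹' S₃) =
      μ.real (V₁ ⁻¹' S₁) * μ.real (V₂ ⁻¹' S₂) * μ.real (V₃ ⁻¹' S₃) := by
  have hS : ∀ i ∈ Finset.univ, MeasurableSet (![S₁, S₂, S₃] i) := by
    intro i _; fin_cases i <;> assumption
  have hprod := h.measure_inter_preimage_eq_mul Finset.univ hS
  have hinter : ⋂ i ∈ Finset.univ, ![V₁, V₂, V₃] i ⁻¹' ![S₁, S₂, S₃] i =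
      V₁ ⁻¹' S₁ ∩ V₂ ⁻¹' S₂ ∩ V₃ ⁻¹' S₃ := by
    ext ω; simp [Fin.forall_fin_succ, and_assoc]
  rw [hinter, Fin.prod_univ_three] at hprod
  simp [measureReal_def, hprod]

lemma iIndepFun.measureReal_max_lt_and_max_lt {V₁ V₂ V₃ : Ω → ℕ} (h : iIndepFun ![V₁, V₂, V₃] μ)
    (a b : ℕ) :
    μ.real {ω | max (V₁ ω) (V₃ ω) < a ∧ max (V₂ ω) (V₃ ω) < b} =
      μ.real {ω | V₁ ω < a} * μ.real {ω | V₂ ω < b} * μ.real {ω | V₃ ω < min a b} := by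
  have hset : {ω | max (V₁ ω) (V₃ ω) < a ∧ max (V₂ ω) (V₃ ω) < b} =
      V₁ ⁻¹' {n | n < a} ∩ V₂ ⁻¹' {n | n < b} ∩ V₃ ⁻¹' {n | n < min a b} := by
    ext ω; simp only [Set.mem_ofPred_eq, Set.mem_inter_iff, Set.mem_preimage]; omega
  rw [hset, h.measureReal_inter_preimage_three .of_discrete .of_discrete .of_discrete]
  rfl

lemma iIndepFun.measureReal_max_lt [IsProbabilityMeasure μ] {V₁ V₂ V₃ : Ω → ℕ}
    (h : iIndepFun ![V₁, V₂, V₃] μ) (b : ℕ) :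
    μ.real {ω | max (V₂ ω) (V₃ ω) < b} = μ.real {ω | V₂ ω < b} * μ.real {ω | V₃ ω < b} := by
  have hset : {ω | max (V₂ ω) (V₃ ω) < b} =
      V₁ ⁻¹' Set.univ ∩ V₂ ⁻¹' {n | n < b} ∩ V₃ ⁻¹' {n | n < b} := by
    ext ω; simp
  rw [hset, h.measureReal_inter_preimage_three .univ .of_discrete .of_discrete]
  simp

lemma iIndepFun.measureReal_max_eq [IsProbabilityMeasure μ] {V₁ V₂ V₃ : Ω → ℕ}
    (h : iIndepFun ![V₁, V₂, V₃] μ) (hm₂ : Measurable V₂) (hm₃ : Measurable V₃) (x : ℕ) :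
    μ.real {ω | max (V₂ ω) (V₃ ω) = x} =
      μ.real {ω | V₂ ω < x + 1} * μ.real {ω | V₃ ω < x + 1} -
        μ.real {ω | V₂ ω < x} * μ.real {ω | V₃ ω < x} := by
  have h' := measureReal_eq_and_eq_sub (μ := μ) (hm₂.max hm₃) (P := fun _ => True) .univ x
  simp only [and_true] at h'
  rw [h', h.measureReal_max_lt, h.measureReal_max_lt]

end ProbabilityTheory

/-- The conditional PMF of `X₁` given `X₂ = x₂` for the BDEW distribution. -/
theorem bdew_conditional_pmf
    {Ω : Type*} [MeasurableSpace Ω] (μ : Measure Ω) [IsProbabilityMeasure μ]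
    (α p β₁ β₂ β₃ : ℝ)
    (hp0 : 0 < p) (hp1 : p < 1) (hα : 0 < α)
    (hβ₁ : 0 < β₁) (hβ₂ : 0 < β₂) (hβ₃ : 0 < β₃)
    (V₁ V₂ V₃ : Ω → ℕ)
    (hm₁ : Measurable V₁) (hm₂ : Measurable V₂) (hm₃ : Measurable V₃)
    (hindep : iIndepFun ![V₁, V₂, V₃] μ)
    (hcdf₁ : ∀ x : ℕ, (μ {ω | V₁ ω ≤ x}).toReal = edwCDF α p β₁ x)
    (hcdf₂ : ∀ x : ℕ, (μ {ω | V₂ ω ≤ x}).toReal = edwCDF α p β₂ x)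
    (hcdf₃ : ∀ x : ℕ, (μ {ω | V₃ ω ≤ x}).toReal = edwCDF α p β₃ x) :
    ∀ x₁ x₂ : ℕ,
      (x₁ < x₂ →
        (μ {ω | max (V₁ ω) (V₃ ω) = x₁ ∧ max (V₂ ω) (V₃ ω) = x₂}).toReal /
            (μ {ω | max (V₂ ω) (V₃ ω) = x₂}).toReal =
          edwPMF α p (β₁ + β₃) x₁ * edwPMF α p β₂ x₂ / edwPMF α p (β₂ + β₃) x₂) ∧
      (x₂ < x₁ →
        (μ {ω | max (V₁ ω) (V₃ ω) = x₁ ∧ max (V₂ ω) (V₃ ω) = x₂}).toReal /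
            (μ {ω | max (V₂ ω) (V₃ ω) = x₂}).toReal =
          edwPMF α p β₁ x₁) ∧
      (x₁ = x₂ →
        (μ {ω | max (V₁ ω) (V₃ ω) = x₁ ∧ max (V₂ ω) (V₃ ω) = x₂}).toReal /
            (μ {ω | max (V₂ ω) (V₃ ω) = x₂}).toReal =
          (1 - p ^ (((x₁ : ℝ) + 1) ^ α)) ^ β₁ -
            (1 - p ^ ((x₁ : ℝ) ^ α)) ^ (β₁ + β₃) * edwPMF α p β₂ x₁ /
              edwPMF α p (β₂ + β₃) x₁) := by
  intro x₁ x₂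
  have hV₁ := measureReal_lt_eq_dwBase_rpow hα.ne' hβ₁.ne' hcdf₁
  have hV₂ := measureReal_lt_eq_dwBase_rpow hα.ne' hβ₂.ne' hcdf₂
  have hV₃ := measureReal_lt_eq_dwBase_rpow hα.ne' hβ₃.ne' hcdf₃
  have hpow₁₃ := dwBase_rpow_add (α := α) hp0.le hp1.le (add_pos hβ₁ hβ₃).ne'
  have hpow₂₃ := dwBase_rpow_add (α := α) hp0.le hp1.le (add_pos hβ₂ hβ₃).ne'
  have hD := (edwPMF_pos hp0 hp1 hα (add_pos hβ₂ hβ₃) x₂).ne'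
  simp only [← measureReal_def, measureReal_eq_and_eq (hm₁.max hm₃) (hm₂.max hm₃),
    hindep.measureReal_max_lt_and_max_lt, hindep.measureReal_max_eq hm₂ hm₃, hV₁, hV₂, hV₃,
    edwPMF_eq_dwBase, hpow₁₃, hpow₂₃, ← dwBase_succ] at hD ⊢
  refine ⟨fun h => ?_, fun h => ?_, fun h => ?_⟩
  · simp (disch := omega) only [min_eq_left]
    ring
  · simp (disch := omega) only [min_eq_right]
    rw [div_eq_iff hD]
    ring
  · subst h
    simp only [min_self, min_eq_left (Nat.le_succ x₁), min_eq_right (Nat.le_succ x₁)]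
    rw [← dwBase, hpow₁₃, div_eq_iff hD, sub_mul, div_mul_cancel₀ _ hD]
    ring
end
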